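/- arXiv:2003.03370 — 3 statements merged into one kernel-verified Lean document; each statement's English description precedes it below -/
import Mathlib

section
/- For every real R > 0, every κ > 0, every natural number n and every natural number ℓ, the integral ∫₀^R (r² − R²)^n · r^(ℓ+2) · j_ℓ(κ r) dr equals (−2)^n · n! · R^(ℓ+n+2) · j_(ℓ+n+1)(κ R) / κ^(n+1), where j_ℓ denotes the spherical Bessel function of the first kind. -/
open scoped Nat
open Polynomial

/-- Spherical Bessel function of the first kind, via its power series. -/
noncomputable def sphJ (l : ℕ) (x : ℝ) : ℝ :=
  x ^ l / ((2 * l + 1)‼ : ℝ) *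
    ∑' s : ℕ, ((-1 : ℝ) ^ s / (s.factorial * (ascPochhammer ℝ s).eval ((l : ℝ) + 3 / 2))) *
      (x / 2) ^ (2 * s)

/-- Modified spherical Bessel function of the first kind, via its power series. -/
noncomputable def sphI (l : ℕ) (x : ℝ) : ℝ :=
  x ^ l / ((2 * l + 1)‼ : ℝ) *
    ∑' s : ℕ, (1 / (s.factorial * (ascPochhammer ℝ s).eval ((l : ℝ) + 3 / 2))) *
      (x / 2) ^ (2 * s)

/-- Modified spherical Bessel function of the second kind, via its closed form. -/
noncomputable def sphK (l : ℕ) (x : ℝ) : ℝ :=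
  Real.exp (-x) / x *
    ∑ s ∈ Finset.range (l + 1),
      ((l + s).factorial : ℝ) / (s.factorial * (l - s).factorial * (2 * x) ^ s)

/-!
Expanding `sphJ l x = ∑ₛ aₗ(s) x ^ (l + 2s)` with `aₗ(s) = (-1)ˢ / (2ˢ s! (2l + 2s + 1)‼)`, the
coefficients satisfy `(2l + 2s + 3) aₗ₊₁(s) = aₗ(s)`, so termwise differentiation gives
`(x ^ (l + 2) j_{l+1}(x))' = x ^ (l + 2) j_l(x)`. This is the case `n = 0` by the fundamental
theorem of calculus. For `n + 1`, integrating by parts against `(r² - R²) ^ (n + 1)` (boundary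
terms vanish at `r = R` and, through `r ^ (l + 2)`, at `r = 0`) yields `-2(n + 1)/κ` times the
integral for `(n, l + 1)`.
-/

theorem doubleFactorial_mul_two_pow_mul_ascPochhammer_eval (l s : ℕ) :
    ((2 * l + 1)‼ : ℝ) * 2 ^ s * (ascPochhammer ℝ s).eval ((l : ℝ) + 3 / 2)
      = ((2 * l + 2 * s + 1)‼ : ℝ) := by
  induction s with
  | zero => simp
  | succ s ih =>
    rw [ascPochhammer_succ_eval, show 2 * l + 2 * (s + 1) + 1 = (2 * l + 2 * s + 1) + 2 by ring,
      Nat.doubleFactorial_add_two, Nat.cast_mul, ← ih]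
    push_cast
    ring

theorem hasDerivAt_tsum_mul_pow {c : ℕ → ℝ} (hc : ∀ s, |c s| ≤ 1 / s !) (d k : ℕ) (x : ℝ) :
    HasDerivAt (fun y => ∑' s, c s * y ^ (d + k * s))
      (∑' s, c s * (d + k * s : ℕ) * x ^ (d + k * s - 1)) x := by
  set M := |x| + 1
  have hM : 1 ≤ M := by simp [M]
  -- `m ≤ 2 ^ m` and `|y| ≤ M` bound the differentiated terms by `(2M) ^ (d + k s) / s!`.
  have hbound : ∀ s, ∀ y ∈ Metric.ball (0 : ℝ) M,
      ‖c s * (d + k * s : ℕ) * y ^ (d + k * s - 1)‖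
        ≤ (2 * M) ^ d * ((2 * M) ^ k) ^ s / s ! := by
    intro s y hy
    set m := d + k * s
    have hy : |y| ≤ M := (mem_ball_zero_iff.mp hy).le
    have hm : (m : ℝ) ≤ 2 ^ m := by exact_mod_cast (Nat.lt_two_pow_self).le
    have hpow : |y| ^ (m - 1) ≤ M ^ m :=
      (pow_le_pow_left₀ (abs_nonneg y) hy _).trans (pow_le_pow_right₀ hM (Nat.sub_le m 1))
    calc ‖c s * m * y ^ (m - 1)‖ = |c s| * m * |y| ^ (m - 1) := by simp
      _ ≤ 1 / s ! * 2 ^ m * M ^ m := by gcongr; exact hc s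
      _ = (2 * M) ^ d * ((2 * M) ^ k) ^ s / s ! := by rw [← pow_mul, ← pow_add, mul_pow]; ring
  refine hasDerivAt_tsum_of_isPreconnected (y₀ := 0)
    (g := fun s y => c s * y ^ (d + k * s)) ?_ Metric.isOpen_ball
    (convex_ball 0 M).isPreconnected (fun s y _ => ?_) hbound
    (Metric.mem_ball_self (by linarith)) ?_ (by simp [M])
  · simpa [mul_div_assoc] using
      (Real.summable_pow_div_factorial ((2 * M) ^ k)).mul_left ((2 * M) ^ d)
  · simpa [mul_assoc] using (hasDerivAt_pow (d + k * s) y).const_mul (c s)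
  · refine .of_norm_bounded (Real.summable_pow_div_factorial 1) fun s => ?_
    calc ‖c s * 0 ^ (d + k * s)‖ ≤ |c s| := by
          rw [norm_mul, norm_pow, norm_zero]
          exact mul_le_of_le_one_right (abs_nonneg _) (pow_le_one₀ le_rfl zero_le_one)
      _ ≤ 1 ^ s / s ! := by simpa using hc s

noncomputable def sphJCoeff (l s : ℕ) : ℝ :=
  (-1) ^ s / (2 ^ s * s ! * ((2 * l + 2 * s + 1)‼ : ℝ))

theorem abs_sphJCoeff_le (l s : ℕ) : |sphJCoeff l s| ≤ 1 / s ! := by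
  rw [sphJCoeff, abs_div, abs_pow, abs_neg, abs_one, one_pow,
    abs_of_pos (by positivity)]
  gcongr
  calc (s ! : ℝ) = 1 * s ! * 1 := by ring
    _ ≤ 2 ^ s * s ! * ((2 * l + 2 * s + 1)‼ : ℝ) := by
      gcongr
      · exact one_le_pow₀ one_le_two
      · exact_mod_cast Nat.doubleFactorial_pos _

theorem sphJCoeff_succ_mul (l s : ℕ) :
    sphJCoeff (l + 1) s * (2 * l + 2 * s + 3) = sphJCoeff l s := by
  rw [sphJCoeff, sphJCoeff, show 2 * (l + 1) + 2 * s + 1 = (2 * l + 2 * s + 1) + 2 by ring,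
    Nat.doubleFactorial_add_two]
  have : (0 : ℝ) < (2 * l + 2 * s + 1)‼ := by positivity
  push_cast
  field_simp
  ring

theorem sphJ_eq_tsum (l : ℕ) (x : ℝ) : sphJ l x = ∑' s, sphJCoeff l s * x ^ (l + 2 * s) := by
  rw [sphJ, ← tsum_mul_left]
  refine tsum_congr fun s => ?_
  rw [sphJCoeff, ← doubleFactorial_mul_two_pow_mul_ascPochhammer_eval, div_pow, pow_mul, pow_add]
  have : 0 < (ascPochhammer ℝ s).eval ((l : ℝ) + 3 / 2) := ascPochhammer_pos s _ (by positivity)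
  have : (0 : ℝ) < (2 * l + 1)‼ := by positivity
  field_simp
  ring

theorem differentiable_sphJ (l : ℕ) : Differentiable ℝ (sphJ l) := fun x => by
  rw [funext (sphJ_eq_tsum l)]
  exact (hasDerivAt_tsum_mul_pow (abs_sphJCoeff_le l) l 2 x).differentiableAt

theorem hasDerivAt_pow_mul_sphJ_succ (l : ℕ) (x : ℝ) :
    HasDerivAt (fun y => y ^ (l + 2) * sphJ (l + 1) y) (x ^ (l + 2) * sphJ l x) x := by
  have hseries : ∀ y : ℝ, y ^ (l + 2) * sphJ (l + 1) y
      = ∑' s, sphJCoeff (l + 1) s * y ^ (2 * l + 3 + 2 * s) := by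
    intro y
    rw [sphJ_eq_tsum, ← tsum_mul_left]
    exact tsum_congr fun s => by ring
  simp only [hseries]
  convert hasDerivAt_tsum_mul_pow (abs_sphJCoeff_le (l + 1)) (2 * l + 3) 2 x using 1
  rw [sphJ_eq_tsum, ← tsum_mul_left]
  refine tsum_congr fun s => ?_
  rw [← sphJCoeff_succ_mul, show 2 * l + 3 + 2 * s - 1 = (l + 2) + (l + 2 * s) by omega]
  push_cast
  ring

theorem hasDerivAt_pow_mul_sphJ_succ_mul_div {κ : ℝ} (hκ : κ ≠ 0) (l : ℕ) (x : ℝ) :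
    HasDerivAt (fun r => r ^ (l + 2) * sphJ (l + 1) (κ * r) / κ)
      (x ^ (l + 2) * sphJ l (κ * x)) x := by
  have hscale : (fun r => r ^ (l + 2) * sphJ (l + 1) (κ * r) / κ)
      = fun r => (κ * r) ^ (l + 2) * sphJ (l + 1) (κ * r) / κ ^ (l + 3) := by
    funext r
    field_simp
    ring
  rw [hscale]
  refine (((hasDerivAt_pow_mul_sphJ_succ l (κ * x)).comp x
    ((hasDerivAt_id x).const_mul κ)).div_const _).congr_deriv ?_
  field_simp
  ring

theorem intervalIntegrable_pow_mul_sphJ (κ R : ℝ) (l j : ℕ) :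
    IntervalIntegrable (fun r => r ^ j * sphJ l (κ * r)) MeasureTheory.volume 0 R :=
  ((continuous_pow j).mul ((differentiable_sphJ l).continuous.comp
    (continuous_const_mul κ))).intervalIntegrable 0 R

theorem integral_pow_mul_sphJ {κ : ℝ} (hκ : κ ≠ 0) (R : ℝ) (l : ℕ) :
    ∫ r in (0 : ℝ)..R, r ^ (l + 2) * sphJ l (κ * r) = R ^ (l + 2) * sphJ (l + 1) (κ * R) / κ := by
  rw [intervalIntegral.integral_eq_sub_of_hasDerivAt
    (fun x _ => hasDerivAt_pow_mul_sphJ_succ_mul_div hκ l x)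
    (intervalIntegrable_pow_mul_sphJ κ R l (l + 2))]
  simp

theorem integral_sub_sq_pow_succ_mul_sphJ {κ : ℝ} (hκ : κ ≠ 0) (R : ℝ) (n l : ℕ) :
    ∫ r in (0 : ℝ)..R, (r ^ 2 - R ^ 2) ^ (n + 1) * r ^ (l + 2) * sphJ l (κ * r)
      = -(2 * (n + 1) / κ) *
          ∫ r in (0 : ℝ)..R, (r ^ 2 - R ^ 2) ^ n * r ^ (l + 1 + 2) * sphJ (l + 1) (κ * r) := by
  have hu : ∀ x ∈ Set.uIcc (0 : ℝ) R, HasDerivAt (fun r => (r ^ 2 - R ^ 2) ^ (n + 1))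
      ((n + 1) * (x ^ 2 - R ^ 2) ^ n * (2 * x)) x := fun x _ => by
    simpa using ((hasDerivAt_pow 2 x).sub_const (R ^ 2)).fun_pow (n + 1)
  have hu' : IntervalIntegrable (fun x => (n + 1) * (x ^ 2 - R ^ 2) ^ n * (2 * x))
      MeasureTheory.volume 0 R := (by fun_prop : Continuous _).intervalIntegrable 0 R
  have hibp := intervalIntegral.integral_mul_deriv_eq_deriv_mul hu
    (fun x _ => hasDerivAt_pow_mul_sphJ_succ_mul_div hκ l x) hu'
    (intervalIntegrable_pow_mul_sphJ κ R l (l + 2))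
  simp only [sub_self, zero_pow (Nat.succ_ne_zero n), zero_pow (Nat.succ_ne_zero (l + 1)),
    zero_mul, mul_zero, zero_div, zero_sub] at hibp
  simp only [mul_assoc, hibp, ← intervalIntegral.integral_neg,
    ← intervalIntegral.integral_const_mul]
  congr 1
  funext r
  field_simp
  ring

theorem sphJ_weighted_integral_general (R κ : ℝ) (hκ : 0 < κ) (n l : ℕ) :
    ∫ r in (0:ℝ)..R, (r ^ 2 - R ^ 2) ^ n * r ^ (l + 2) * sphJ l (κ * r)
      = (-2 : ℝ) ^ n * n.factorial * R ^ (l + n + 2) * sphJ (l + n + 1) (κ * R) / κ ^ (n + 1) := by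
  induction n generalizing l with
  | zero => simpa using integral_pow_mul_sphJ hκ.ne' R l
  | succ n ih =>
    rw [integral_sub_sq_pow_succ_mul_sphJ hκ.ne', ih, Nat.factorial_succ,
      show l + 1 + n = l + (n + 1) by ring]
    push_cast
    field_simp
    ring

theorem sphJ_weighted_integral (R κ : ℝ) (hR : 0 < R) (hκ : 0 < κ) (n l : ℕ) :
    ∫ r in (0:ℝ)..R, (r ^ 2 - R ^ 2) ^ n * r ^ (l + 2) * sphJ l (κ * r)
      = (-2 : ℝ) ^ n * n.factorial * R ^ (l + n + 2) * sphJ (l + n + 1) (κ * R) / κ ^ (n + 1) :=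
  sphJ_weighted_integral_general R κ hκ n l
end

section
/- For every real R > 0, every κ > 0, every natural number n and every natural number ℓ, the integral ∫₀^R (r² − R²)^n · r^(ℓ+2) · i_ℓ(κ r) dr equals (−2)^n · n! · R^(ℓ+n+2) · i_(ℓ+n+1)(κ R) / κ^(n+1), where i_ℓ denotes the modified spherical Bessel function of the first kind. -/
open scoped Nat
open Polynomial

/-!
Expanding `i_ℓ` as a power series in `x` and differentiating termwise gives
`d/dr (r^(ℓ+2) i_(ℓ+1)(κ r) / κ) = r^(ℓ+2) i_ℓ(κ r)`, which settles `n = 0` by the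
fundamental theorem of calculus. Integrating by parts against `(r² - R²)^(n+1)`, whose boundary
terms vanish at `r = R` and (through `r^(ℓ+2)`) at `r = 0`, trades `n + 1` for `n` and `ℓ` for
`ℓ + 1` at the cost of a factor `-2 (n + 1) / κ`; induction on `n` gives the formula.
-/

/-- The `+ 1` in the majorant also controls the series at `0`, where `0 ^ 0 = 1`. -/
theorem hasDerivAt_tsum_mul_pow_s1 {𝕜 : Type*} [RCLike 𝕜] {a : ℕ → 𝕜} {e : ℕ → ℕ}
    (ha : ∀ ρ : ℝ, Summable fun s => ((e s : ℝ) + 1) * ‖a s‖ * ρ ^ e s) (x : 𝕜) :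
    HasDerivAt (fun y => ∑' s, a s * y ^ e s) (∑' s, a s * e s * x ^ (e s - 1)) x := by
  set ρ := ‖x‖ + 1
  have hρ : 1 ≤ ρ := le_add_of_nonneg_left (norm_nonneg x)
  refine hasDerivAt_tsum_of_isPreconnected (g := fun s y => a s * y ^ e s)
    (g' := fun s y => a s * e s * y ^ (e s - 1)) (ha ρ) Metric.isOpen_ball
    (convex_ball (0 : 𝕜) ρ).isPreconnected (fun s y _ => ?_) (fun s y hy => ?_)
    (Metric.mem_ball_self (by linarith)) ?_ (mem_ball_zero_iff.2 (lt_add_one _))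
  · simpa [mul_assoc] using (hasDerivAt_pow (e s) y).const_mul (a s)
  · have hy : ‖y‖ ^ (e s - 1) ≤ ρ ^ e s :=
      (pow_le_pow_left₀ (norm_nonneg y) (mem_ball_zero_iff.1 hy).le _).trans
        (pow_le_pow_right₀ hρ (Nat.sub_le _ _))
    calc ‖a s * e s * y ^ (e s - 1)‖ = e s * (‖a s‖ * ‖y‖ ^ (e s - 1)) := by
          simp only [norm_mul, norm_pow, RCLike.norm_natCast]; ring
      _ ≤ (e s + 1) * (‖a s‖ * ρ ^ e s) := by gcongr; linarith
      _ = (e s + 1) * ‖a s‖ * ρ ^ e s := by ring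
  · refine (ha 1).of_norm_bounded fun s => ?_
    rcases (e s).eq_zero_or_pos with h | h
    · simp [h]
    · simp only [zero_pow h.ne', mul_zero, norm_zero, one_pow, mul_one]
      positivity

lemma one_le_ascPochhammer_eval {a : ℝ} (ha : 1 ≤ a) (n : ℕ) :
    1 ≤ (ascPochhammer ℝ n).eval a := by
  induction n with
  | zero => simp
  | succ n ih =>
    rw [ascPochhammer_succ_eval]
    nlinarith [n.cast_nonneg (α := ℝ)]

lemma ascPochhammer_eval_mul_add (n : ℕ) (a : ℝ) :
    (ascPochhammer ℝ n).eval a * (a + n) = a * (ascPochhammer ℝ n).eval (a + 1) := by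
  rw [← ascPochhammer_succ_eval, ascPochhammer_succ_left]
  simp

noncomputable def sphICoeff (l s : ℕ) : ℝ :=
  (4 ^ s * s ! * (ascPochhammer ℝ s).eval ((l : ℝ) + 3 / 2) * (2 * l + 1)‼)⁻¹

lemma sphI_eq_tsum (l : ℕ) (x : ℝ) : sphI l x = ∑' s, sphICoeff l s * x ^ (2 * s + l) := by
  rw [sphI, ← tsum_mul_left]
  congr 1 with s
  rw [sphICoeff, pow_add, pow_mul, pow_mul, div_pow, div_pow]
  field_simp
  norm_num

lemma sphICoeff_nonneg (l s : ℕ) : 0 ≤ sphICoeff l s := by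
  have := ascPochhammer_pos s ((l : ℝ) + 3 / 2) (by positivity)
  unfold sphICoeff
  positivity

lemma sphICoeff_le (l s : ℕ) : sphICoeff l s ≤ (s ! : ℝ)⁻¹ := by
  refine inv_anti₀ (by positivity) ?_
  have hp : 1 ≤ (ascPochhammer ℝ s).eval ((l : ℝ) + 3 / 2) :=
    one_le_ascPochhammer_eval (by linarith [l.cast_nonneg (α := ℝ)]) s
  have hd : (1 : ℝ) ≤ (2 * l + 1)‼ := by exact_mod_cast (2 * l + 1).doubleFactorial_pos
  calc (s ! : ℝ) = 1 * s ! * 1 * 1 := by ring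
    _ ≤ _ := by gcongr; exact one_le_pow₀ (by norm_num)

lemma sphICoeff_succ (l s : ℕ) :
    (2 * s + 2 * l + 3) * sphICoeff (l + 1) s = sphICoeff l s := by
  have hshift := ascPochhammer_eval_mul_add s ((l : ℝ) + 3 / 2)
  have hp := ascPochhammer_pos s ((l : ℝ) + 3 / 2) (by positivity)
  have hdf : ((2 * (l + 1) + 1)‼ : ℝ) = (2 * l + 3) * (2 * l + 1)‼ := by
    rw [show 2 * (l + 1) + 1 = 2 * l + 1 + 2 by ring, Nat.doubleFactorial_add_two]
    push_cast; ring
  have hd : (0 : ℝ) < (2 * l + 1)‼ := by exact_mod_cast (2 * l + 1).doubleFactorial_pos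
  have hp' := ascPochhammer_pos s ((l : ℝ) + 3 / 2 + 1) (by positivity)
  unfold sphICoeff
  rw [hdf, Nat.cast_succ, show (l : ℝ) + 1 + 3 / 2 = l + 3 / 2 + 1 by ring]
  generalize (ascPochhammer ℝ s).eval ((l : ℝ) + 3 / 2) = p at *
  generalize (ascPochhammer ℝ s).eval ((l : ℝ) + 3 / 2 + 1) = q at *
  field_simp
  linear_combination 2 * hshift

lemma summable_sphICoeff_mul_pow (l m : ℕ) (ρ : ℝ) :
    Summable fun s => (((2 * s + m : ℕ) : ℝ) + 1) * ‖sphICoeff l s‖ * ρ ^ (2 * s + m) := by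
  refine ((Real.summable_pow_div_factorial (3 * ρ ^ 2)).mul_left
    ((m + 1) * |ρ| ^ m)).of_norm_bounded fun s => ?_
  have hcoeff : ‖sphICoeff l s‖ ≤ (s ! : ℝ)⁻¹ := by
    rw [Real.norm_of_nonneg (sphICoeff_nonneg l s)]
    exact sphICoeff_le l s
  have hlin : ((2 * s + m : ℕ) : ℝ) + 1 ≤ (m + 1) * 3 ^ s := by
    have hbern : 1 + (s : ℝ) * 2 ≤ 3 ^ s :=
      (one_add_mul_le_pow (by norm_num) s).trans_eq (by norm_num)
    calc ((2 * s + m : ℕ) : ℝ) + 1 ≤ (m + 1) * (1 + s * 2) := by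
          push_cast
          nlinarith [mul_nonneg (m.cast_nonneg (α := ℝ)) (s.cast_nonneg (α := ℝ))]
      _ ≤ (m + 1) * 3 ^ s := by gcongr
  calc ‖(((2 * s + m : ℕ) : ℝ) + 1) * ‖sphICoeff l s‖ * ρ ^ (2 * s + m)‖
      = (((2 * s + m : ℕ) : ℝ) + 1) * ‖sphICoeff l s‖ * (|ρ| ^ m * (ρ ^ 2) ^ s) := by
        rw [norm_mul, norm_mul, norm_norm, norm_pow, Real.norm_eq_abs ρ,
          Real.norm_of_nonneg (by positivity : (0 : ℝ) ≤ ((2 * s + m : ℕ) : ℝ) + 1),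
          pow_add, pow_mul, sq_abs]
        ring
    _ ≤ ((m + 1) * 3 ^ s) * (s ! : ℝ)⁻¹ * (|ρ| ^ m * (ρ ^ 2) ^ s) := by gcongr
    _ = (m + 1) * |ρ| ^ m * ((3 * ρ ^ 2) ^ s / s !) := by ring

lemma differentiable_sphI (l : ℕ) : Differentiable ℝ (sphI l) := fun x => by
  rw [show sphI l = fun x => ∑' s, sphICoeff l s * x ^ (2 * s + l) from
    funext (sphI_eq_tsum l)]
  exact (hasDerivAt_tsum_mul_pow_s1 (summable_sphICoeff_mul_pow l l) x).differentiableAt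

lemma hasDerivAt_pow_mul_sphI_succ (l : ℕ) (x : ℝ) :
    HasDerivAt (fun x => x ^ (l + 2) * sphI (l + 1) x) (x ^ (l + 2) * sphI l x) x := by
  have hseries : (fun x : ℝ => x ^ (l + 2) * sphI (l + 1) x)
      = fun x => ∑' s, sphICoeff (l + 1) s * x ^ (2 * s + (2 * l + 3)) := by
    ext y
    rw [sphI_eq_tsum, ← tsum_mul_left]
    congr 1 with s
    ring
  have hderiv : x ^ (l + 2) * sphI l x = ∑' s, sphICoeff (l + 1) s *
      ((2 * s + (2 * l + 3) : ℕ) : ℝ) * x ^ (2 * s + (2 * l + 3) - 1) := by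
    rw [sphI_eq_tsum, ← tsum_mul_left]
    congr 1 with s
    rw [← sphICoeff_succ, show 2 * s + (2 * l + 3) - 1 = l + 2 + (2 * s + l) by omega]
    push_cast
    ring
  rw [hseries, hderiv]
  exact hasDerivAt_tsum_mul_pow_s1 (summable_sphICoeff_mul_pow (l + 1) (2 * l + 3)) x

lemma hasDerivAt_pow_mul_sphI_succ_const_mul (l : ℕ) {κ : ℝ} (hκ : κ ≠ 0) (r : ℝ) :
    HasDerivAt (fun r => r ^ (l + 2) * sphI (l + 1) (κ * r) / κ)
      (r ^ (l + 2) * sphI l (κ * r)) r := by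
  have hfun : (fun r => r ^ (l + 2) * sphI (l + 1) (κ * r) / κ)
      = fun r => (κ * r) ^ (l + 2) * sphI (l + 1) (κ * r) / κ ^ (l + 3) := by
    ext y
    field_simp
    ring
  rw [hfun]
  refine (((hasDerivAt_pow_mul_sphI_succ l (κ * r)).comp r
    ((hasDerivAt_id r).const_mul κ)).div_const _).congr_deriv ?_
  field_simp
  ring

lemma integral_pow_mul_sphI (l : ℕ) {κ : ℝ} (hκ : κ ≠ 0) (R : ℝ) :
    ∫ r in (0 : ℝ)..R, r ^ (l + 2) * sphI l (κ * r)
      = R ^ (l + 2) * sphI (l + 1) (κ * R) / κ := by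
  have hcont := (differentiable_sphI l).continuous
  rw [intervalIntegral.integral_eq_sub_of_hasDerivAt
    (fun r _ => hasDerivAt_pow_mul_sphI_succ_const_mul l hκ r)
    ((by fun_prop : Continuous _).intervalIntegrable _ _)]
  simp

lemma integral_sq_sub_sq_pow_succ_mul_sphI (n l : ℕ) {κ : ℝ} (hκ : κ ≠ 0) (R : ℝ) :
    ∫ r in (0 : ℝ)..R, (r ^ 2 - R ^ 2) ^ (n + 1) * r ^ (l + 2) * sphI l (κ * r)
      = -(2 * (n + 1) / κ) *
          ∫ r in (0 : ℝ)..R, (r ^ 2 - R ^ 2) ^ n * r ^ (l + 1 + 2) * sphI (l + 1) (κ * r) := by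
  have hcont := (differentiable_sphI l).continuous
  have hu : ∀ r ∈ Set.uIcc 0 R, HasDerivAt (fun r => (r ^ 2 - R ^ 2) ^ (n + 1))
      ((n + 1 : ℕ) * (r ^ 2 - R ^ 2) ^ n * (2 * r)) r := fun r _ => by
    simpa using ((hasDerivAt_pow 2 r).sub_const (R ^ 2)).fun_pow (n + 1)
  have hparts := intervalIntegral.integral_mul_deriv_eq_deriv_mul hu
    (fun r _ => hasDerivAt_pow_mul_sphI_succ_const_mul l hκ r)
    ((by fun_prop : Continuous _).intervalIntegrable _ _)
    ((by fun_prop : Continuous _).intervalIntegrable _ _)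
  simp only [sub_self, zero_pow (Nat.succ_ne_zero _), zero_mul, zero_div, mul_zero] at hparts
  calc _ = ∫ r in (0 : ℝ)..R, (r ^ 2 - R ^ 2) ^ (n + 1) * (r ^ (l + 2) * sphI l (κ * r)) := by
          simp only [mul_assoc]
    _ = _ := by
      rw [hparts, zero_sub, ← intervalIntegral.integral_const_mul,
        ← intervalIntegral.integral_neg]
      congr 1 with r
      push_cast
      field_simp
      ring

theorem sphI_weighted_integral_general (R κ : ℝ) (hκ : 0 < κ) (n l : ℕ) :
    ∫ r in (0:ℝ)..R, (r ^ 2 - R ^ 2) ^ n * r ^ (l + 2) * sphI l (κ * r)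
      = (-2 : ℝ) ^ n * n.factorial * R ^ (l + n + 2) * sphI (l + n + 1) (κ * R) / κ ^ (n + 1) := by
  induction n generalizing l with
  | zero => simpa using integral_pow_mul_sphI l hκ.ne' R
  | succ n ih =>
    rw [integral_sq_sub_sq_pow_succ_mul_sphI n l hκ.ne' R, ih (l + 1), Nat.factorial_succ,
      show l + 1 + n + 2 = l + (n + 1) + 2 by ring, show l + 1 + n + 1 = l + (n + 1) + 1 by ring]
    field_simp
    push_cast
    ring

theorem sphI_weighted_integral (R κ : ℝ) (hR : 0 < R) (hκ : 0 < κ) (n l : ℕ) :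
    ∫ r in (0:ℝ)..R, (r ^ 2 - R ^ 2) ^ n * r ^ (l + 2) * sphI l (κ * r)
      = (-2 : ℝ) ^ n * n.factorial * R ^ (l + n + 2) * sphI (l + n + 1) (κ * R) / κ ^ (n + 1) :=
  sphI_weighted_integral_general R κ hκ n l
end

section
/- For R > 0, λ > 0, K > 0 with K ≠ 0, and every natural number ℓ, the integral ∫₀^R i_ℓ(λr) j_ℓ(Kr) r² dr equals (R²/(K²+λ²)) · (K · i_ℓ(λR) · j_(ℓ+1)(KR) + λ · i_(ℓ+1)(λR) · j_ℓ(KR)). -/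
open scoped Nat
open Polynomial

/-!
Write `f_l(x) = x^l G_l(ε x² / 4)` with `G_l(z) = ∑ₛ zˢ / ((2l+1)‼ s! (l + 3/2)ₛ)` entire:
`ε = 1` gives `i_l`, `ε = -1` gives `j_l`, and the rescaling `x ↦ c x` only replaces `ε` by `ε c²`.
In terms of `G` the identities `(x⁻ˡ f_l)' = ε x⁻ˡ f_{l+1}` and `(x^{l+2} f_{l+1})' = x^{l+2} f_l`
read `G_l' = 2 G_{l+1}` and `G_l = (2l+3) G_{l+1} + 4z G_{l+2}`, both coefficientwise facts about
Pochhammer symbols. By the product rule, for `f`, `g` with parameters `ε`, `δ`, the function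
`r² (ε f_{l+1} g_l - δ f_l g_{l+1})` is an antiderivative of `(ε - δ) r² f_l g_l`
(a Lommel integral); the theorem is the case `ε = λ²`, `δ = -K²`.
-/

theorem one_le_ascPochhammer_eval_s6 {S : Type*} [Semiring S] [PartialOrder S] [IsOrderedRing S]
    {x : S} (hx : 1 ≤ x) (n : ℕ) : 1 ≤ (ascPochhammer S n).eval x := by
  induction n with
  | zero => simp
  | succ n ih =>
    rw [ascPochhammer_succ_eval]
    exact one_le_mul_of_one_le_of_one_le ih (le_add_of_le_of_nonneg hx n.cast_nonneg)

theorem ascPochhammer_succ_eval_eq_mul_eval_add_one {S : Type*} [CommSemiring S] (n : ℕ) (x : S) :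
    (ascPochhammer S (n + 1)).eval x = x * (ascPochhammer S n).eval (x + 1) := by
  simp [ascPochhammer_succ_left, eval_comp]

section PowerSeries

variable {c : ℕ → ℝ} {C : ℝ}

theorem summable_mul_pow_of_abs_le_div_factorial (hc : ∀ s, |c s| ≤ C / s !) (z : ℝ) :
    Summable fun s => c s * z ^ s := by
  refine .of_norm_bounded ((Real.summable_pow_div_factorial |z|).mul_left C) fun s => ?_
  rw [Real.norm_eq_abs, abs_mul, abs_pow, ← mul_div_assoc, mul_div_right_comm]
  gcongr
  exact hc s

theorem hasDerivAt_tsum_mul_pow_of_abs_le_div_factorial (hc : ∀ s, |c s| ≤ C / s !) (z : ℝ) :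
    HasDerivAt (fun z => ∑' s, c s * z ^ s) (∑' s, (s + 1) * c (s + 1) * z ^ s) z := by
  set T := |z| + 1
  have hz : z ∈ Metric.ball (0 : ℝ) T := by simp [T]
  have hbound : ∀ s, ∀ y ∈ Metric.ball (0 : ℝ) T,
      ‖c s * (s * y ^ (s - 1))‖ ≤ C / s ! * (s * T ^ (s - 1)) := by
    intro s y hy
    rw [mem_ball_zero_iff, Real.norm_eq_abs] at hy
    rw [Real.norm_eq_abs, abs_mul, abs_mul, abs_pow, Nat.abs_cast]
    gcongr
    exacts [(abs_nonneg _).trans (hc s), hc s]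
  have hsum : Summable fun s => C / s ! * (s * T ^ (s - 1)) := by
    rw [← summable_nat_add_iff 1]
    refine ((Real.summable_pow_div_factorial T).mul_left C).congr fun s => ?_
    rw [Nat.factorial_succ, Nat.add_sub_cancel]
    push_cast
    field_simp
  have hderiv := hasDerivAt_tsum_of_isPreconnected (g := fun s y => c s * y ^ s) hsum
    Metric.isOpen_ball (convex_ball 0 T).isPreconnected
    (fun s y _ => (hasDerivAt_pow s y).const_mul (c s)) hbound hz
    (summable_mul_pow_of_abs_le_div_factorial hc z) hz
  refine hderiv.congr_deriv ?_
  rw [(Summable.of_norm_bounded hsum fun s => hbound s z hz).tsum_eq_zero_add]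
  simp only [Nat.cast_zero, zero_mul, mul_zero, zero_add, Nat.cast_add, Nat.cast_one,
    Nat.add_sub_cancel]
  congr 1 with s
  ring

end PowerSeries

noncomputable def sphCoeff (l s : ℕ) : ℝ :=
  ((2 * l + 1)‼ * s ! * (ascPochhammer ℝ s).eval ((l : ℝ) + 3 / 2) : ℝ)⁻¹

theorem abs_sphCoeff_le (l s : ℕ) : |sphCoeff l s| ≤ 1 / s ! := by
  have hP : 1 ≤ (ascPochhammer ℝ s).eval ((l : ℝ) + 3 / 2) :=
    one_le_ascPochhammer_eval_s6 (by linarith [l.cast_nonneg (α := ℝ)]) s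
  have hD : (1 : ℝ) ≤ (2 * l + 1)‼ := by exact_mod_cast Nat.doubleFactorial_pos _
  rw [sphCoeff, abs_of_nonneg (by positivity), one_div]
  gcongr
  rw [mul_right_comm]
  exact le_mul_of_one_le_left (by positivity) (one_le_mul_of_one_le_of_one_le hD hP)

theorem doubleFactorial_two_mul_add_three (l : ℕ) :
    ((2 * (l + 1) + 1)‼ : ℝ) = (2 * l + 3) * (2 * l + 1)‼ := by
  rw [show 2 * (l + 1) + 1 = 2 * l + 1 + 2 by ring, Nat.doubleFactorial_add_two]
  push_cast
  ring

theorem sphCoeff_eq_mul_sphCoeff_succ (l s : ℕ) :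
    sphCoeff l s = (2 * l + 3 + 2 * s) * sphCoeff (l + 1) s := by
  have hc : (0 : ℝ) < l + 3 / 2 := by positivity
  have hP := ascPochhammer_pos s _ hc
  have hP' := ascPochhammer_pos s _ (add_pos hc one_pos)
  have hshift := (ascPochhammer_succ_eval s ((l : ℝ) + 3 / 2)).symm.trans
    (ascPochhammer_succ_eval_eq_mul_eval_add_one s _)
  rw [sphCoeff, sphCoeff, doubleFactorial_two_mul_add_three, Nat.cast_succ,
    show (l : ℝ) + 1 + 3 / 2 = l + 3 / 2 + 1 by ring]
  have : (0 : ℝ) < (2 * l + 1)‼ := by exact_mod_cast Nat.doubleFactorial_pos _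
  generalize (ascPochhammer ℝ s).eval ((l : ℝ) + 3 / 2) = P at *
  generalize (ascPochhammer ℝ s).eval ((l : ℝ) + 3 / 2 + 1) = Q at *
  field_simp
  linear_combination -2 * hshift

theorem succ_mul_sphCoeff_succ (l s : ℕ) :
    (s + 1) * sphCoeff l (s + 1) = 2 * sphCoeff (l + 1) s := by
  have hc : (0 : ℝ) < l + 3 / 2 := by positivity
  have hP' := ascPochhammer_pos s _ (add_pos hc one_pos)
  rw [sphCoeff, sphCoeff, doubleFactorial_two_mul_add_three, Nat.cast_succ,
    show (l : ℝ) + 1 + 3 / 2 = l + 3 / 2 + 1 by ring, ascPochhammer_succ_eval_eq_mul_eval_add_one,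
    Nat.factorial_succ]
  have : (0 : ℝ) < (2 * l + 1)‼ := by exact_mod_cast Nat.doubleFactorial_pos _
  push_cast
  field_simp

noncomputable def sphSeries (l : ℕ) (z : ℝ) : ℝ :=
  ∑' s, sphCoeff l s * z ^ s

theorem summable_sphCoeff_mul_pow (l : ℕ) (z : ℝ) : Summable fun s => sphCoeff l s * z ^ s :=
  summable_mul_pow_of_abs_le_div_factorial (abs_sphCoeff_le l) z

theorem hasDerivAt_sphSeries (l : ℕ) (z : ℝ) :
    HasDerivAt (sphSeries l) (2 * sphSeries (l + 1) z) z := by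
  refine (hasDerivAt_tsum_mul_pow_of_abs_le_div_factorial (abs_sphCoeff_le l) z).congr_deriv ?_
  simp_rw [succ_mul_sphCoeff_succ, mul_assoc, tsum_mul_left, sphSeries]

theorem sphSeries_eq_add (l : ℕ) (z : ℝ) :
    sphSeries l z = (2 * l + 3) * sphSeries (l + 1) z + 4 * z * sphSeries (l + 2) z := by
  have hdiff : Summable fun s => (sphCoeff l s - (2 * l + 3) * sphCoeff (l + 1) s) * z ^ s := by
    simpa [sub_mul, mul_assoc] using
      (summable_sphCoeff_mul_pow l z).sub
        ((summable_sphCoeff_mul_pow (l + 1) z).mul_left (2 * l + 3 : ℝ))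
  have hshift : ∀ s : ℕ,
      (sphCoeff l (s + 1) - (2 * l + 3) * sphCoeff (l + 1) (s + 1)) * z ^ (s + 1)
        = 4 * z * (sphCoeff (l + 2) s * z ^ s) := by
    intro s
    have := succ_mul_sphCoeff_succ (l + 1) s
    rw [sphCoeff_eq_mul_sphCoeff_succ l (s + 1)]
    push_cast at this ⊢
    linear_combination 2 * z ^ (s + 1) * this
  have hsub : sphSeries l z - (2 * l + 3) * sphSeries (l + 1) z = 4 * z * sphSeries (l + 2) z := by
    rw [sphSeries, sphSeries, ← tsum_mul_left, ← (summable_sphCoeff_mul_pow l z).tsum_sub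
      ((summable_sphCoeff_mul_pow (l + 1) z).mul_left _)]
    simp_rw [← mul_assoc, ← sub_mul]
    rw [hdiff.tsum_eq_zero_add, sphCoeff_eq_mul_sphCoeff_succ l 0]
    simp_rw [hshift, tsum_mul_left, sphSeries]
    simp
  linear_combination hsub

noncomputable def sphBessel (ε : ℝ) (l : ℕ) (x : ℝ) : ℝ :=
  x ^ l * sphSeries l (ε * (x / 2) ^ 2)

theorem sphI_eq_sphBessel : sphI = sphBessel 1 := by
  ext l x
  simp_rw [sphI, sphBessel, sphSeries, sphCoeff, one_mul, ← pow_mul, ← tsum_mul_left]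
  congr 1 with s
  field_simp

theorem sphJ_eq_sphBessel : sphJ = sphBessel (-1) := by
  ext l x
  simp_rw [sphJ, sphBessel, sphSeries, sphCoeff, mul_pow, ← pow_mul, ← tsum_mul_left]
  congr 1 with s
  field_simp

theorem sphBessel_mul (ε c : ℝ) (l : ℕ) (x : ℝ) :
    sphBessel ε l (c * x) = c ^ l * sphBessel (ε * c ^ 2) l x := by
  simp only [sphBessel]
  ring_nf

/-- `(x⁻ˡ f_l)' = ε x⁻ˡ f_{l+1}` for `f = sphBessel ε`, in a form regular at `0`. -/
theorem hasDerivAt_sphSeries_mul_sq (ε : ℝ) (l : ℕ) (x : ℝ) :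
    HasDerivAt (fun x => sphSeries l (ε * (x / 2) ^ 2))
      (ε * x * sphSeries (l + 1) (ε * (x / 2) ^ 2)) x := by
  have hinner : HasDerivAt (fun x : ℝ => ε * (x / 2) ^ 2) (ε * x / 2) x :=
    ((((hasDerivAt_id x).div_const 2).pow 2).const_mul ε).congr_deriv (by simp only [id]; ring)
  exact ((hasDerivAt_sphSeries l _).comp x hinner).congr_deriv (by ring)

theorem hasDerivAt_pow_mul_sphBessel_succ (ε : ℝ) (l : ℕ) (x : ℝ) :
    HasDerivAt (fun x => x ^ (l + 2) * sphBessel ε (l + 1) x)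
      (x ^ (l + 2) * sphBessel ε l x) x := by
  have hfun : (fun x => x ^ (l + 2) * sphBessel ε (l + 1) x)
      = fun x => x ^ (2 * l + 3) * sphSeries (l + 1) (ε * (x / 2) ^ 2) := by
    ext x
    simp only [sphBessel]
    ring
  have hpow : HasDerivAt (fun x : ℝ => x ^ (2 * l + 3)) ((2 * l + 3) * x ^ (2 * l + 2)) x := by
    simpa using hasDerivAt_pow (2 * l + 3) x
  rw [hfun]
  refine (hpow.mul (hasDerivAt_sphSeries_mul_sq ε (l + 1) x)).congr_deriv ?_
  rw [sphBessel, sphSeries_eq_add l]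
  ring

theorem hasDerivAt_sq_mul_sphBessel_mul_sphBessel_succ (ε δ : ℝ) (l : ℕ) (r : ℝ) :
    HasDerivAt (fun r => r ^ 2 * sphBessel ε l r * sphBessel δ (l + 1) r)
      (r ^ 2 * (ε * sphBessel ε (l + 1) r * sphBessel δ (l + 1) r
        + sphBessel ε l r * sphBessel δ l r)) r := by
  have hfun : (fun r => r ^ 2 * sphBessel ε l r * sphBessel δ (l + 1) r)
      = fun r => sphSeries l (ε * (r / 2) ^ 2) * (r ^ (l + 2) * sphBessel δ (l + 1) r) := by
    ext r
    simp only [sphBessel]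
    ring
  rw [hfun]
  refine ((hasDerivAt_sphSeries_mul_sq ε l r).mul
    (hasDerivAt_pow_mul_sphBessel_succ δ l r)).congr_deriv ?_
  simp only [sphBessel]
  ring

theorem continuous_sphBessel (ε : ℝ) (l : ℕ) : Continuous (sphBessel ε l) :=
  continuous_iff_continuousAt.2 fun x =>
    ((continuous_pow l).continuousAt).mul (hasDerivAt_sphSeries_mul_sq ε l x).continuousAt

theorem sub_mul_integral_sq_mul_sphBessel_mul_sphBessel (ε δ : ℝ) (l : ℕ) (R : ℝ) :
    (ε - δ) * ∫ r in (0 : ℝ)..R, r ^ 2 * sphBessel ε l r * sphBessel δ l r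
      = R ^ 2 * (ε * sphBessel ε (l + 1) R * sphBessel δ l R
        - δ * sphBessel ε l R * sphBessel δ (l + 1) R) := by
  have hF : ∀ r, HasDerivAt (fun r => r ^ 2 * (ε * sphBessel ε (l + 1) r * sphBessel δ l r
      - δ * sphBessel ε l r * sphBessel δ (l + 1) r))
      ((ε - δ) * (r ^ 2 * sphBessel ε l r * sphBessel δ l r)) r := by
    intro r
    have hδε := (hasDerivAt_sq_mul_sphBessel_mul_sphBessel_succ δ ε l r).const_mul ε
    have hεδ := (hasDerivAt_sq_mul_sphBessel_mul_sphBessel_succ ε δ l r).const_mul δ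
    refine ((hδε.sub hεδ).congr_deriv (by ring)).congr_of_eventuallyEq (.of_forall fun y => ?_)
    rw [Pi.sub_apply]
    ring
  have hcont : Continuous fun r => (ε - δ) * (r ^ 2 * sphBessel ε l r * sphBessel δ l r) := by
    have := continuous_sphBessel ε l
    have := continuous_sphBessel δ l
    fun_prop
  rw [← intervalIntegral.integral_const_mul,
    intervalIntegral.integral_eq_sub_of_hasDerivAt (fun r _ => hF r) (hcont.intervalIntegrable _ _)]
  simp

theorem sphI_sphJ_integral_general (R lam K : ℝ)
    (hK' : K ≠ 0) (l : ℕ) :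
    ∫ r in (0:ℝ)..R, sphI l (lam * r) * sphJ l (K * r) * r ^ 2
      = R ^ 2 / (K ^ 2 + lam ^ 2) *
        (K * sphI l (lam * R) * sphJ (l + 1) (K * R)
          + lam * sphI (l + 1) (lam * R) * sphJ l (K * R)) := by
  have hKlam : K ^ 2 + lam ^ 2 ≠ 0 :=
    (add_pos_of_pos_of_nonneg (sq_pos_of_ne_zero hK') (sq_nonneg lam)).ne'
  have hlommel := sub_mul_integral_sq_mul_sphBessel_mul_sphBessel (lam ^ 2) (-K ^ 2) l R
  simp_rw [sphI_eq_sphBessel, sphJ_eq_sphBessel, sphBessel_mul, one_mul, neg_one_mul]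
  have hintegrand : ∀ r,
      lam ^ l * sphBessel (lam ^ 2) l r * (K ^ l * sphBessel (-K ^ 2) l r) * r ^ 2
        = lam ^ l * K ^ l * (r ^ 2 * sphBessel (lam ^ 2) l r * sphBessel (-K ^ 2) l r) :=
    fun r => by ring
  simp_rw [hintegrand, intervalIntegral.integral_const_mul]
  field_simp
  linear_combination lam ^ l * K ^ l * hlommel

theorem sphI_sphJ_integral (R lam K : ℝ) (hR : 0 < R) (hlam : 0 < lam) (hK : 0 < K)
    (hK' : K ≠ 0) (l : ℕ) :
    ∫ r in (0:ℝ)..R, sphI l (lam * r) * sphJ l (K * r) * r ^ 2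
      = R ^ 2 / (K ^ 2 + lam ^ 2) *
        (K * sphI l (lam * R) * sphJ (l + 1) (K * R)
          + lam * sphI (l + 1) (lam * R) * sphJ l (K * R)) :=
  sphI_sphJ_integral_general R lam K hK' l
end
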